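/- Let ∂X = D ⊔ N with D and N both nonempty and disjoint. For every f ∈ L(X°) and g ∈ L(∂X) there exists a unique u ∈ L(X) such that Δu = f on X°, u = g on D, and ∂_n u = g on N. Defining f̃ ∈ L(X°∪N) by f̃ = f on X° and f̃ = −g on N, it is given by u_{X°∪N} = −G_{X°∪N}( f̃ − P_{X°∪N, D} g_D ) and u_D = g_D. -/
import Mathlib


open Matrix Finset

/-- The Laplacian `Δu = Pu − u` acting on complex functions. -/
noncomputable def lap {X : Type*} [Fintype X] (P : Matrix X X ℝ) (u : X → ℂ) (x : X) : ℂ :=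
  (∑ y, (P x y : ℂ) * u y) - u x

/-- The `A × A` submatrix of `P`. -/
def subMatrix {X : Type*} (P : Matrix X X ℝ) (A : Finset X) : Matrix A A ℝ :=
  Matrix.of fun x y => P x.1 y.1

/-- The Green kernel `G_A = (I_A − P_A)⁻¹`. -/
noncomputable def green {X : Type*} [DecidableEq X] (P : Matrix X X ℝ) (A : Finset X) :
    Matrix A A ℝ :=
  (1 - subMatrix P A)⁻¹

lemma pow_entry_nonneg {X : Type*} [Fintype X] [DecidableEq X] (P : Matrix X X ℝ)
    (h : ∀ x y, 0 ≤ P x y) : ∀ n x y, 0 ≤ (P ^ n) x y := by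
  intro n
  induction n with
  | zero => intro x y; simp [Matrix.one_apply]; split <;> norm_num
  | succ n ih =>
    intro x y
    rw [pow_succ, Matrix.mul_apply]
    exact Finset.sum_nonneg fun z _ => mul_nonneg (ih x z) (h z y)

lemma max_principle {X : Type*} [Fintype X] [DecidableEq X] (P : Matrix X X ℝ)
    (hnonneg : ∀ x y, 0 ≤ P x y) (hrow : ∀ x, ∑ y, P x y = 1)
    (hirr : ∀ x y, ∃ n, 1 ≤ n ∧ 0 < (P ^ n) x y)
    (A : Finset X) (hA : A ≠ Finset.univ)
    (v : ↥A → ℝ) (hv : (subMatrix P A).mulVec v = v) : v = 0 := by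
  obtain ⟨z, hz⟩ : ∃ z, z ∉ A := by
    by_contra h
    push_neg at h
    exact hA (Finset.eq_univ_iff_forall.mpr h)
  -- extend v by zero
  set w : X → ℝ := fun x => if h : x ∈ A then v ⟨x, h⟩ else 0 with hw
  have hwz : ∀ x, x ∉ A → w x = 0 := fun x hx => dif_neg hx
  have hstep0 : ∀ x (hx : x ∈ A), w x = ∑ y, P x y * w y := by
    intro x hx
    have h1 : (subMatrix P A).mulVec v ⟨x, hx⟩ = v ⟨x, hx⟩ := by rw [hv]
    rw [Matrix.mulVec, dotProduct] at h1
    have h2 : ∑ y, P x y * w y = ∑ y ∈ A, P x y * w y + ∑ y ∈ Aᶜ, P x y * w y :=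
      (Finset.sum_add_sum_compl A _).symm
    have h3 : ∑ y ∈ Aᶜ, P x y * w y = 0 := by
      apply Finset.sum_eq_zero
      intro y hy
      rw [hwz y (Finset.mem_compl.mp hy), mul_zero]
    have h4 : ∑ y ∈ A, P x y * w y = ∑ y : ↥A, P x y.1 * w y.1 :=
      (Finset.sum_coe_sort A _).symm
    have h5 : ∀ y : ↥A, w y.1 = v y := fun y => dif_pos y.2
    rw [h2, h3, h4, add_zero]
    have : ∑ y : ↥A, P x y.1 * w y.1 = ∑ y : ↥A, subMatrix P A ⟨x, hx⟩ y * v y := by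
      apply Finset.sum_congr rfl
      intro y _; rw [h5 y]; rfl
    rw [this, h1]
    show w x = v ⟨x, hx⟩
    exact dif_pos hx
  -- the max
  have hXne : Nonempty X := ⟨z⟩
  have hune : (Finset.univ : Finset X).Nonempty := Finset.univ_nonempty
  set m : ℝ := Finset.univ.sup' hune (fun x => |w x|) with hm
  have hle : ∀ x, |w x| ≤ m := by
    intro x; rw [hm]; exact Finset.le_sup' (fun x => |w x|) (Finset.mem_univ x)
  obtain ⟨x₀, -, hx₀⟩ := Finset.exists_mem_eq_sup' hune (fun x => |w x|)
  have hxm : |w x₀| = m := by rw [hm]; exact hx₀.symm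
  by_cases hm0 : m ≤ 0
  · funext y
    have h0 : |w y.1| = 0 := le_antisymm ((hle y.1).trans hm0) (abs_nonneg _)
    have h1 : w y.1 = 0 := abs_eq_zero.mp h0
    have h2 : w y.1 = v y := dif_pos y.2
    rw [h2] at h1
    exact h1
  push_neg at hm0
  exfalso
  -- one-step propagation of the maximum
  have onestep : ∀ x, |w x| = m → ∀ y, 0 < P x y → |w y| = m := by
    intro x hx y hyP
    have hxA : x ∈ A := by
      by_contra hxA
      rw [hwz x hxA] at hx
      simp at hx
      exact absurd hx.symm (ne_of_gt hm0)
    have hub : m ≤ ∑ y', P x y' * |w y'| := by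
      calc m = |w x| := hx.symm
        _ = |∑ y', P x y' * w y'| := by rw [hstep0 x hxA]
        _ ≤ ∑ y', |P x y' * w y'| := Finset.abs_sum_le_sum_abs _ _
        _ = ∑ y', P x y' * |w y'| := by
            apply Finset.sum_congr rfl
            intro y' _
            rw [abs_mul, abs_of_nonneg (hnonneg x y')]
    have heq : ∑ y', P x y' * (m - |w y'|) = m - ∑ y', P x y' * |w y'| := by
      simp_rw [mul_sub]
      rw [Finset.sum_sub_distrib, ← Finset.sum_mul, hrow, one_mul]
    have hge : ∀ y' ∈ Finset.univ, 0 ≤ P x y' * (m - |w y'|) := fun y' _ =>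
      mul_nonneg (hnonneg x y') (sub_nonneg.mpr (hle y'))
    have hzero : ∑ y', P x y' * (m - |w y'|) = 0 := by
      have h1 : ∑ y', P x y' * (m - |w y'|) ≤ 0 := by rw [heq]; linarith
      exact le_antisymm h1 (Finset.sum_nonneg hge)
    have := (Finset.sum_eq_zero_iff_of_nonneg hge).mp hzero y (Finset.mem_univ y)
    rcases mul_eq_zero.mp this with h | h
    · exact absurd h (ne_of_gt hyP)
    · linarith [sub_eq_zero.mp h]
  -- multi-step propagation
  have multi : ∀ n x y, |w x| = m → 0 < (P ^ (n + 1)) x y → |w y| = m := by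
    intro n
    induction n with
    | zero =>
      intro x y hx hp
      rw [pow_one] at hp
      exact onestep x hx y hp
    | succ n ih =>
      intro x y hx hp
      rw [pow_succ, Matrix.mul_apply] at hp
      obtain ⟨c, hc⟩ : ∃ c, 0 < (P ^ (n + 1)) x c * P c y := by
        by_contra hc
        push_neg at hc
        have h0 : ∑ c, (P ^ (n + 1)) x c * P c y = 0 :=
          Finset.sum_eq_zero fun c _ =>
            le_antisymm (hc c) (mul_nonneg (pow_entry_nonneg P hnonneg _ x c) (hnonneg c y))
        rw [h0] at hp
        exact lt_irrefl 0 hp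
      rcases mul_pos_iff.mp hc with ⟨h1, h2⟩ | ⟨h1, h2⟩
      · exact onestep c (ih x c hx h1) y h2
      · exact absurd (pow_entry_nonneg P hnonneg _ x c) (not_le.mpr h1)
  -- conclude
  have hx₀A : x₀ ∈ A := by
    by_contra hxA
    rw [hwz x₀ hxA] at hxm
    simp at hxm
    exact absurd hxm.symm (ne_of_gt hm0)
  obtain ⟨n, hn1, hnp⟩ := hirr x₀ z
  obtain ⟨k, rfl⟩ : ∃ k, n = k + 1 := ⟨n - 1, (Nat.succ_pred_eq_of_pos hn1).symm⟩
  have hwzm : |w z| = m := multi k x₀ z hxm hnp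
  rw [hwz z hz] at hwzm
  simp at hwzm
  exact absurd hwzm.symm (ne_of_gt hm0)

lemma det_unit {X : Type*} [Fintype X] [DecidableEq X] (P : Matrix X X ℝ)
    (hnonneg : ∀ x y, 0 ≤ P x y) (hrow : ∀ x, ∑ y, P x y = 1)
    (hirr : ∀ x y, ∃ n, 1 ≤ n ∧ 0 < (P ^ n) x y)
    (A : Finset X) (hA : A ≠ Finset.univ) :
    IsUnit (1 - subMatrix P A).det := by
  rw [isUnit_iff_ne_zero]
  intro hdet
  obtain ⟨v, hv0, hv⟩ := (Matrix.exists_mulVec_eq_zero_iff).mpr hdet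
  apply hv0
  apply max_principle P hnonneg hrow hirr A hA
  have := hv
  rw [Matrix.sub_mulVec, Matrix.one_mulVec, sub_eq_zero] at this
  exact this.symm

-- complex versions
lemma mapped_mul {X : Type*} [Fintype X] [DecidableEq X] (P : Matrix X X ℝ)
    (hnonneg : ∀ x y, 0 ≤ P x y) (hrow : ∀ x, ∑ y, P x y = 1)
    (hirr : ∀ x y, ∃ n, 1 ≤ n ∧ 0 < (P ^ n) x y)
    (A : Finset X) (hA : A ≠ Finset.univ) :
    ((1 - subMatrix P A).map (Complex.ofRealHom : ℝ →+* ℂ)) * ((green P A).map (Complex.ofRealHom : ℝ →+* ℂ)) = 1 ∧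
    ((green P A).map (Complex.ofRealHom : ℝ →+* ℂ)) * ((1 - subMatrix P A).map (Complex.ofRealHom : ℝ →+* ℂ)) = 1 := by
  have hu := det_unit P hnonneg hrow hirr A hA
  have h1 : (1 - subMatrix P A) * green P A = 1 := Matrix.mul_nonsing_inv _ hu
  have h2 : green P A * (1 - subMatrix P A) = 1 := Matrix.nonsing_inv_mul _ hu
  constructor
  · rw [← Matrix.map_mul, h1, Matrix.map_one _ (map_zero _) (map_one _)]
  · rw [← Matrix.map_mul, h2, Matrix.map_one _ (map_zero _) (map_one _)]

/-- Solution of the mixed boundary problem with `∂X = D ⊔ N`: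
there is a unique `u` with `Δu = f` on `X°`, `u = g` on `D` and `∂ₙu = g` on `N`;
with `f̃ = f` on `X°`, `f̃ = −g` on `N`, it is given by
`u_{X°∪N} = −G_{X°∪N}(f̃ − P_{X°∪N,D} g_D)` and `u_D = g_D`. -/
theorem mixed_boundary_problem {X : Type*} [Fintype X] [DecidableEq X]
    (P : Matrix X X ℝ)
    (hcard : 1 < Fintype.card X)
    (hnonneg : ∀ x y, 0 ≤ P x y)
    (hrow : ∀ x, ∑ y, P x y = 1)
    (hirr : ∀ x y, ∃ n, 1 ≤ n ∧ 0 < (P ^ n) x y)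
    (D N : Finset X) (hD : D.Nonempty) (hN : N.Nonempty)
    (hDN : Disjoint D N) (hB' : D ∪ N ≠ Finset.univ)
    (f g : X → ℂ) :
    (∃! u : X → ℂ,
      (∀ x, x ∉ D ∪ N → lap P u x = f x) ∧ (∀ x ∈ D, u x = g x) ∧
        (∀ x ∈ N, -lap P u x = g x)) ∧
    (∀ u : X → ℂ,
      ((∀ x, x ∉ D ∪ N → lap P u x = f x) ∧ (∀ x ∈ D, u x = g x) ∧
        (∀ x ∈ N, -lap P u x = g x)) →
      ∀ x, ∀ hx : x ∈ (D ∪ N)ᶜ ∪ N,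
        u x = -∑ y : ↥((D ∪ N)ᶜ ∪ N),
          ((green P ((D ∪ N)ᶜ ∪ N) ⟨x, hx⟩ y : ℝ) : ℂ) *
            ((if y.1 ∈ N then -g y.1 else f y.1) -
              ∑ z : ↥D, ((P y.1 z.1 : ℝ) : ℂ) * g z.1)) := by
  set A : Finset X := (D ∪ N)ᶜ ∪ N with hAdef
  -- membership facts
  have hmemA : ∀ x, x ∈ A ↔ (x ∉ D ∪ N ∨ x ∈ N) := by
    intro x
    rw [hAdef, Finset.mem_union, Finset.mem_compl]
  have hnotA : ∀ x, x ∉ A ↔ x ∈ D := by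
    intro x
    rw [hmemA x]
    push_neg
    constructor
    · rintro ⟨h1, h2⟩
      rw [Finset.mem_union] at h1
      exact h1.resolve_right h2
    · intro hx
      exact ⟨Finset.mem_union_left _ hx, Finset.disjoint_left.mp hDN hx⟩
  have hAcD : Aᶜ = D := Finset.ext fun x => by rw [Finset.mem_compl]; exact hnotA x
  have hAuniv : A ≠ Finset.univ := by
    obtain ⟨d, hd⟩ := hD
    intro h
    have : d ∈ A := h ▸ Finset.mem_univ d
    exact absurd hd ((hnotA d).not.mp (not_not.mpr this) )
  -- matrices over ℂ
  set Mc : Matrix ↥A ↥A ℂ := (1 - subMatrix P A).map ((Complex.ofRealHom : ℝ →+* ℂ)) with hMc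
  set gC : Matrix ↥A ↥A ℂ := (green P A).map ((Complex.ofRealHom : ℝ →+* ℂ)) with hgC
  obtain ⟨hMg, hgM⟩ := mapped_mul P hnonneg hrow hirr A hAuniv
  set b : ↥A → ℂ := fun y =>
    (if y.1 ∈ N then -g y.1 else f y.1) - ∑ z : ↥D, ((P y.1 z.1 : ℝ) : ℂ) * g z.1 with hb
  -- key pointwise identity
  have hkey : ∀ u : X → ℂ, (∀ x ∈ D, u x = g x) → ∀ (x : X) (hx : x ∈ A),
      Mc.mulVec (fun y : ↥A => u y.1) ⟨x, hx⟩
        = (if x ∈ N then -g x else f x) - lap P u x - b ⟨x, hx⟩ := by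
    intro u huD x hx
    have expand : Mc.mulVec (fun y : ↥A => u y.1) ⟨x, hx⟩
        = u x - ∑ y : ↥A, ((P x y.1 : ℝ) : ℂ) * u y.1 := by
      rw [Matrix.mulVec, dotProduct]
      have h1 : ∀ y : ↥A, Mc ⟨x, hx⟩ y * u y.1
          = (if (⟨x, hx⟩ : ↥A) = y then u y.1 else 0) - ((P x y.1 : ℝ) : ℂ) * u y.1 := by
        intro y
        rw [hMc, Matrix.map_apply, Matrix.sub_apply, Matrix.one_apply]
        simp only [subMatrix, Matrix.of_apply]
        split <;> simp [sub_mul]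
      rw [Finset.sum_congr rfl (fun y _ => h1 y), Finset.sum_sub_distrib,
        Finset.sum_ite_eq Finset.univ (⟨x, hx⟩ : ↥A) (fun y => u y.1)]
      simp
    have hlapsplit : lap P u x = (∑ y : ↥A, ((P x y.1 : ℝ) : ℂ) * u y.1)
        + (∑ z : ↥D, ((P x z.1 : ℝ) : ℂ) * g z.1) - u x := by
      rw [lap]
      congr 1
      rw [← Finset.sum_add_sum_compl A (fun y => ((P x y : ℝ) : ℂ) * u y), hAcD]
      congr 1
      · exact (Finset.sum_coe_sort A _).symm
      · rw [← Finset.sum_coe_sort D (fun z => ((P x z : ℝ) : ℂ) * u z)]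
        exact Finset.sum_congr rfl fun z _ => by rw [huD z.1 z.2]
    rw [expand, hlapsplit, hb]
    ring
  -- every solution satisfies the matrix equation
  have hforward : ∀ u : X → ℂ,
      ((∀ x, x ∉ D ∪ N → lap P u x = f x) ∧ (∀ x ∈ D, u x = g x) ∧
        (∀ x ∈ N, -lap P u x = g x)) →
      Mc.mulVec (fun y : ↥A => u y.1) = -b := by
    rintro u ⟨h1, h2, h3⟩
    funext y
    obtain ⟨x, hx⟩ := y
    have hl : lap P u x = (if x ∈ N then -g x else f x) := by
      by_cases hxN : x ∈ N
      · rw [if_pos hxN]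
        linear_combination -(h3 x hxN)
      · rw [if_neg hxN]
        exact h1 x ((((hmemA x).mp hx).resolve_right hxN))
    rw [hkey u h2 x hx, hl]
    show _ = -b ⟨x, hx⟩
    ring
  -- hence the values on A
  have hsolve : ∀ u : X → ℂ,
      ((∀ x, x ∉ D ∪ N → lap P u x = f x) ∧ (∀ x ∈ D, u x = g x) ∧
        (∀ x ∈ N, -lap P u x = g x)) →
      (fun y : ↥A => u y.1) = -(gC.mulVec b) := by
    intro u hu
    have hM := hforward u hu
    have h5 : (gC * Mc).mulVec (fun y : ↥A => u y.1) = gC.mulVec (-b) := by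
      rw [← Matrix.mulVec_mulVec, hM]
    rw [hgM, Matrix.one_mulVec, Matrix.mulVec_neg] at h5
    exact h5
  -- the candidate solution
  set u₀ : X → ℂ := fun x => if hx : x ∈ A then (-(gC.mulVec b)) ⟨x, hx⟩ else g x with hu₀
  have hu₀A : (fun y : ↥A => u₀ y.1) = -(gC.mulVec b) := funext fun y => dif_pos y.2
  have hu₀D : ∀ x ∈ D, u₀ x = g x := fun x hx => dif_neg (by rw [hnotA x]; exact hx)
  have hMu₀ : Mc.mulVec (fun y : ↥A => u₀ y.1) = -b := by
    rw [hu₀A, Matrix.mulVec_neg, Matrix.mulVec_mulVec, hMg, Matrix.one_mulVec]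
  have hlap₀ : ∀ (x : X) (hx : x ∈ A), lap P u₀ x = (if x ∈ N then -g x else f x) := by
    intro x hx
    have h := congrFun hMu₀ ⟨x, hx⟩
    rw [hkey u₀ hu₀D x hx] at h
    have h' : _ = -b ⟨x, hx⟩ := h
    linear_combination -h'
  have hcond₀ : (∀ x, x ∉ D ∪ N → lap P u₀ x = f x) ∧ (∀ x ∈ D, u₀ x = g x) ∧
      (∀ x ∈ N, -lap P u₀ x = g x) := by
    refine ⟨?_, hu₀D, ?_⟩
    · intro x hx
      have hxA : x ∈ A := (hmemA x).mpr (Or.inl hx)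
      have hxN : x ∉ N := fun h => hx (Finset.mem_union_right _ h)
      rw [hlap₀ x hxA, if_neg hxN]
    · intro x hx
      have hxA : x ∈ A := (hmemA x).mpr (Or.inr hx)
      rw [hlap₀ x hxA, if_pos hx, neg_neg]
  constructor
  · refine ⟨u₀, hcond₀, ?_⟩
    intro u' hu'
    funext x
    by_cases hx : x ∈ A
    · have h1 := congrFun (hsolve u' hu') ⟨x, hx⟩
      have h2 : u₀ x = (-(gC.mulVec b)) ⟨x, hx⟩ := dif_pos hx
      rw [h1, h2]
    · have hxD : x ∈ D := (hnotA x).mp hx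
      rw [hu'.2.1 x hxD, hu₀D x hxD]
  · intro u hu x hx
    have h1 := congrFun (hsolve u hu) ⟨x, hx⟩
    rw [h1]
    show (-(gC.mulVec b)) ⟨x, hx⟩ = _
    rw [Pi.neg_apply, Matrix.mulVec, dotProduct]
    congr 1
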